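/- For each fixed 0 < λ < 1, there exists a unique μ_h = μ_h(λ) > 1 such that b(λ, μ_h) = 1; moreover 0 < b(λ,μ) < 1 for all 1 < μ < μ_h, and b(λ,μ) > 1 for all μ > μ_h. -/

import Mathlib

/-!
Write `x = x*(λ, μ)`. Eliminating `μ` with the fixed-point quadratic turns `(b - 1) μ⁻¹ x²` into a
quartic `Q_λ(x)`, and `x*` decreases strictly in `μ`, from `1` at `μ = 1`. Since `Q_λ < 0` on
`[0.72, 1]` and `Q_λ` is strictly decreasing on `(0, 0.72]`, once `b ≥ 1` at some `μ` we get
`b > 1` for every larger `μ`. With `b < 1` at `μ = 10/7`, `b > 1` at an explicit larger `μ`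
and continuity, this gives exactly one crossing. That `b > 0` is a separate polynomial
inequality in `x`.
-/

noncomputable section

/-- `x*` coordinate of the interior fixed point of Φ_{λ,μ}. -/
def xstar (l m : ℝ) : ℝ :=
  ((m⁻¹ - l - 1) + Real.sqrt ((1 + l - m⁻¹) ^ 2 + 4 * (1 - l))) / (2 * (1 - l))

/-- `b(λ,μ)`, the determinant of the Jacobian of Φ_{λ,μ} at its interior fixed point. -/
def bdef (l m : ℝ) : ℝ :=
  m * ((l * (4 * m⁻¹ - 1) - 2 * (1 + m⁻¹)) * xstar l m + 2 * (1 - m⁻¹ * (l - m⁻¹)))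

open Set

/-- The first coordinate of the fixed-point equation, `x = 1 - x (λ (1 - x) + y)` at
`y = x - μ⁻¹`, rearranged. -/
def xQuadratic (l m y : ℝ) : ℝ := (1 - l) * y ^ 2 + (1 + l - m⁻¹) * y - 1

section XStar

variable {l m y : ℝ}

lemma xQuadratic_xstar (hl : l < 1) : xQuadratic l m (xstar l m) = 0 := by
  have hD : 0 ≤ (1 + l - m⁻¹) ^ 2 + 4 * (1 - l) := by nlinarith
  have hs := Real.sq_sqrt hD
  set s := Real.sqrt ((1 + l - m⁻¹) ^ 2 + 4 * (1 - l))
  have hx : xstar l m = ((m⁻¹ - l - 1) + s) / (2 * (1 - l)) := rfl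
  have hl' := (sub_pos.2 hl).ne'
  rw [xQuadratic, hx]
  field_simp
  linear_combination hs

lemma xstar_pos (hl : l < 1) : 0 < xstar l m := by
  have hD : 0 ≤ (1 + l - m⁻¹) ^ 2 + 4 * (1 - l) := by nlinarith
  have hlt : 1 + l - m⁻¹ < Real.sqrt ((1 + l - m⁻¹) ^ 2 + 4 * (1 - l)) :=
    Real.lt_sqrt_of_sq_lt (by linarith)
  unfold xstar
  apply div_pos <;> linarith

/-- The other root `-((1 - l) x*)⁻¹` is negative, so on `y > 0` the sign of the quadratic is
the sign of `y - x*`. -/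
lemma xQuadratic_eq_mul (hl : l < 1) :
    xQuadratic l m y = (1 - l) * (y - xstar l m) * (y + ((1 - l) * xstar l m)⁻¹) := by
  have hq := xQuadratic_xstar (m := m) hl
  have hx := (xstar_pos (m := m) hl).ne'
  have hl' := (sub_pos.2 hl).ne'
  unfold xQuadratic at hq ⊢
  field_simp
  linear_combination y * hq

lemma xQuadratic_pos_iff (hl : l < 1) (hy : 0 < y) :
    0 < xQuadratic l m y ↔ xstar l m < y := by
  have hpos : 0 < (1 - l) * (y + ((1 - l) * xstar l m)⁻¹) := by
    have := xstar_pos (m := m) hl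
    have : 0 < 1 - l := sub_pos.2 hl
    positivity
  rw [xQuadratic_eq_mul hl, mul_right_comm, mul_pos_iff_of_pos_left hpos, sub_pos]

lemma xQuadratic_neg_iff (hl : l < 1) (hy : 0 < y) :
    xQuadratic l m y < 0 ↔ y < xstar l m := by
  have hpos : 0 < (1 - l) * (y + ((1 - l) * xstar l m)⁻¹) := by
    have := xstar_pos (m := m) hl
    have : 0 < 1 - l := sub_pos.2 hl
    positivity
  rw [xQuadratic_eq_mul hl, mul_right_comm]
  constructor <;> intro h <;> nlinarith

lemma xstar_lt_one (hl : l < 1) (hm : 1 < m) : xstar l m < 1 := by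
  rw [← xQuadratic_pos_iff hl one_pos]
  have : m⁻¹ < 1 := inv_lt_one_of_one_lt₀ hm
  unfold xQuadratic
  linarith

lemma xstar_strictAntiOn (hl : l < 1) : StrictAntiOn (xstar l) (Ioi 0) := by
  intro m₁ hm₁ m₂ _ hlt
  have hx := xstar_pos (m := m₁) hl
  have hinv : m₂⁻¹ < m₁⁻¹ := inv_strictAnti₀ hm₁ hlt
  rw [← xQuadratic_pos_iff hl hx]
  have hq := xQuadratic_xstar (m := m₁) hl
  unfold xQuadratic at hq ⊢
  nlinarith

lemma xstar_div (hl : l < 1) (hy : 0 < y) :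
    xstar l (y / ((1 - l) * y ^ 2 + (1 + l) * y - 1)) = y := by
  have hq : xQuadratic l (y / ((1 - l) * y ^ 2 + (1 + l) * y - 1)) y = 0 := by
    unfold xQuadratic
    rw [inv_div]
    field_simp
    ring
  refine le_antisymm ?_ ?_
  · exact not_lt.1 fun h => ((xQuadratic_neg_iff hl hy).2 h).ne hq
  · exact not_lt.1 fun h => ((xQuadratic_pos_iff hl hy).2 h).ne' hq

end XStar

/-- What is left of `(b(λ, μ) - 1) μ⁻¹ x*²` after eliminating `μ` with `xQuadratic`. -/
def bQuartic (l x : ℝ) : ℝ :=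
  2 - (2 * l + 3) * x + (l + 1) * x ^ 2 + (2 * l ^ 2 - 1) * x ^ 3 + 2 * l * (1 - l) * x ^ 4

section Quartic

variable {l x : ℝ}

lemma bQuartic_neg (hl0 : 0 < l) (hl1 : l < 1) (hx : 72 / 100 ≤ x) (hx1 : x ≤ 1) :
    bQuartic l x < 0 := by
  unfold bQuartic
  nlinarith [mul_nonneg (sub_pos.2 hl1).le (sub_nonneg.2 hx1), sq_nonneg (1 - x),
    sq_nonneg (x - 72 / 100), mul_nonneg (sub_nonneg.2 hx) (sub_nonneg.2 hx1),
    mul_nonneg (mul_nonneg (sub_nonneg.2 hx) (sub_nonneg.2 hx1)) hl0.le,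
    mul_nonneg (sub_nonneg.2 hx1) (sub_pos.2 hl1).le, sq_nonneg (1 - l),
    mul_pos hl0 (sub_pos.2 hl1),
    mul_nonneg (mul_nonneg (sub_nonneg.2 hx1) (sub_pos.2 hl1).le) hl0.le,
    mul_nonneg (mul_nonneg (sub_nonneg.2 hx1) (sub_nonneg.2 hx1)) (sub_pos.2 hl1).le]

lemma bQuartic_strictAntiOn (hl0 : 0 < l) (hl1 : l < 1) :
    StrictAntiOn (bQuartic l) (Ioc 0 (72 / 100)) := by
  rintro x ⟨hx0, hx⟩ y ⟨hy0, hy⟩ hxy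
  have hs3 : x ^ 3 + x ^ 2 * y + x * y ^ 2 + y ^ 3 ≤ 4 * (72 / 100) ^ 3 := by
    nlinarith [mul_nonneg (mul_nonneg hx0.le hx0.le) hy0.le,
      mul_nonneg hx0.le (mul_nonneg hy0.le hy0.le), sq_nonneg x, sq_nonneg y,
      mul_nonneg (sub_nonneg.2 hx) (mul_nonneg hx0.le hy0.le),
      mul_nonneg (sub_nonneg.2 hy) (mul_nonneg hx0.le hy0.le),
      mul_nonneg (sub_nonneg.2 hx) (sq_nonneg x), mul_nonneg (sub_nonneg.2 hy) (sq_nonneg y),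
      mul_nonneg (sub_nonneg.2 hx) (sq_nonneg y), mul_nonneg (sub_nonneg.2 hy) (sq_nonneg x),
      mul_nonneg (sub_nonneg.2 hx) (sub_nonneg.2 hy), sq_nonneg (x - y), sq_nonneg (x + y)]
  have hs3n : 0 ≤ x ^ 3 + x ^ 2 * y + x * y ^ 2 + y ^ 3 := by positivity
  have hs2 : x ^ 2 + x * y + y ^ 2 ≤ 3 * (72 / 100) ^ 2 := by
    nlinarith [mul_nonneg (sub_nonneg.2 hx) (sub_nonneg.2 hy), sq_nonneg (x - y)]
  have hs2n : 0 ≤ x ^ 2 + x * y + y ^ 2 := by positivity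
  have hslope : 0 < (2 * l + 3) - (l + 1) * (x + y) - (2 * l ^ 2 - 1) * (x ^ 2 + x * y + y ^ 2)
      - 2 * l * (1 - l) * (x ^ 3 + x ^ 2 * y + x * y ^ 2 + y ^ 3) := by
    rcases le_or_gt (2 * l ^ 2) 1 with h | h
    · nlinarith [mul_nonneg (sub_nonneg.2 h) hs2n,
        mul_nonneg (mul_nonneg hl0.le (sub_pos.2 hl1).le) (sub_nonneg.2 hs3),
        sq_nonneg (1 - 2 * l)]
    · nlinarith [mul_nonneg (sub_nonneg.2 h.le) (sub_nonneg.2 hs2),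
        mul_nonneg (mul_nonneg hl0.le (sub_pos.2 hl1).le) (sub_nonneg.2 hs3),
        sq_nonneg (1 - 2 * l), sq_nonneg (1 - l)]
  have hdiff : bQuartic l x - bQuartic l y = (y - x) * ((2 * l + 3) - (l + 1) * (x + y)
      - (2 * l ^ 2 - 1) * (x ^ 2 + x * y + y ^ 2)
      - 2 * l * (1 - l) * (x ^ 3 + x ^ 2 * y + x * y ^ 2 + y ^ 3)) := by
    unfold bQuartic; ring
  nlinarith [mul_pos (sub_pos.2 hxy) hslope]

lemma bQuartic_add_pos (hl0 : 0 < l) (hl1 : l < 1) (hx0 : 0 < x) (hx1 : x < 1) :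
    0 < bQuartic l x + x * ((1 - l) * x ^ 2 + (1 + l) * x - 1) := by
  unfold bQuartic
  rcases le_or_gt x (1 / 2) with h | h
  · nlinarith [sq_nonneg (1 - x - l * x), mul_pos hl0 hx0,
      mul_nonneg (mul_nonneg hl0.le hx0.le) (sub_nonneg.2 h), sq_nonneg (1 - 2 * x),
      mul_pos (mul_pos hl0 hx0) hx0,
      mul_nonneg (mul_nonneg (mul_nonneg hl0.le hx0.le) hx0.le) hx0.le,
      mul_pos hl0 (sub_pos.2 hl1)]
  · nlinarith [sq_nonneg (1 - x - l * x),
      mul_nonneg (mul_nonneg (mul_nonneg hl0.le hx0.le) hx0.le)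
        (mul_nonneg hx0.le (sub_nonneg.2 h.le)),
      mul_nonneg (mul_nonneg (mul_nonneg (mul_nonneg hl0.le hl0.le) hx0.le) hx0.le)
        (mul_nonneg hx0.le (sub_pos.2 hx1).le),
      sq_nonneg (1 - x), mul_pos hl0 hx0,
      mul_nonneg (mul_nonneg hl0.le hx0.le) (sub_pos.2 hx1).le,
      sq_nonneg (l * x - x), sq_nonneg (l * x ^ 2 - 1 + x)]

lemma bQuartic_pos (hl0 : 0 < l) (hl1 : l < 1) : 0 < bQuartic l (13 / 20 - 3 / 25 * l) := by
  unfold bQuartic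
  ring_nf
  nlinarith [sq_nonneg l, sq_nonneg (1 - l), mul_pos hl0 (sub_pos.2 hl1),
    sq_nonneg (l * (1 - l)), mul_nonneg (mul_nonneg hl0.le hl0.le) (sub_pos.2 hl1).le,
    mul_nonneg (mul_nonneg hl0.le hl0.le) hl0.le, sq_nonneg (l - 1 / 2),
    mul_nonneg (mul_nonneg (mul_nonneg hl0.le hl0.le) hl0.le) (sub_pos.2 hl1).le]

end Quartic

section Determinant

variable {l m : ℝ}

lemma bdef_sub_one_mul (hl : l < 1) (hm : m ≠ 0) :
    (bdef l m - 1) * (m⁻¹ * xstar l m ^ 2) = bQuartic l (xstar l m) := by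
  have hq := xQuadratic_xstar (m := m) hl
  have hm1 : m * m⁻¹ = 1 := mul_inv_cancel₀ hm
  set t := m⁻¹
  set x := xstar l m
  unfold bdef bQuartic
  unfold xQuadratic at hq
  linear_combination (((l * (4 * t - 1) - 2 * (1 + t)) * x + 2 * (1 - t * (l - t))) * x ^ 2) * hm1 +
    (-2 * x * t - 2 * l * x ^ 2 - x + 2) * hq

lemma one_lt_bdef_iff (hl : l < 1) (hm : 0 < m) :
    1 < bdef l m ↔ 0 < bQuartic l (xstar l m) := by
  have hx := xstar_pos (m := m) hl
  rw [← bdef_sub_one_mul hl hm.ne', mul_pos_iff_of_pos_right (by positivity), sub_pos]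

lemma bdef_lt_one_iff (hl : l < 1) (hm : 0 < m) :
    bdef l m < 1 ↔ bQuartic l (xstar l m) < 0 := by
  have hx := xstar_pos (m := m) hl
  have hp : 0 < m⁻¹ * xstar l m ^ 2 := by positivity
  rw [← bdef_sub_one_mul hl hm.ne']
  constructor <;> intro h <;> nlinarith

lemma bdef_pos (hl0 : 0 < l) (hl1 : l < 1) (hm : 1 < m) : 0 < bdef l m := by
  have hx0 := xstar_pos (m := m) hl1
  have hx1 := xstar_lt_one hl1 hm
  have hq := xQuadratic_xstar (m := m) hl1
  unfold xQuadratic at hq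
  have hp : 0 < m⁻¹ * xstar l m ^ 2 := by positivity
  have hsum : bdef l m * (m⁻¹ * xstar l m ^ 2) = bQuartic l (xstar l m) + xstar l m *
      ((1 - l) * xstar l m ^ 2 + (1 + l) * xstar l m - 1) := by
    linear_combination bdef_sub_one_mul hl1 (by positivity : m ≠ 0) - xstar l m * hq
  exact pos_of_mul_pos_left (hsum ▸ bQuartic_add_pos hl0 hl1 hx0 hx1) hp.le

/-- Once `b` reaches `1` it stays above `1`: then `x* < 0.72`, and as `μ` grows `x*` decreases
into the region where the quartic increases. -/
lemma one_lt_bdef_of_lt {m₁ m₂ : ℝ} (hl0 : 0 < l) (hl1 : l < 1) (hm₁ : 1 < m₁) (h : m₁ < m₂)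
    (hb : 1 ≤ bdef l m₁) : 1 < bdef l m₂ := by
  have hm₁0 : 0 < m₁ := one_pos.trans hm₁
  have hq₁ : 0 ≤ bQuartic l (xstar l m₁) := by
    by_contra! hneg
    exact ((bdef_lt_one_iff hl1 hm₁0).2 hneg).not_ge hb
  have hx₁ : xstar l m₁ < 72 / 100 := by
    by_contra! hge
    exact (bQuartic_neg hl0 hl1 hge (xstar_lt_one hl1 hm₁).le).not_ge hq₁
  have hx : xstar l m₂ < xstar l m₁ := xstar_strictAntiOn hl1 hm₁0 (hm₁0.trans h) h
  rw [one_lt_bdef_iff hl1 (hm₁0.trans h)]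
  exact hq₁.trans_lt <| bQuartic_strictAntiOn hl0 hl1 ⟨xstar_pos hl1, hx.le.trans hx₁.le⟩
    ⟨xstar_pos hl1, hx₁.le⟩ hx

lemma continuousOn_bdef : ContinuousOn (bdef l) (Ioi 0) := by
  unfold bdef xstar
  fun_prop (disch := intro; simp_all [ne_of_gt])

end Determinant

section Crossing

variable {l : ℝ}

lemma bdef_ten_sevenths_lt_one (hl0 : 0 < l) (hl1 : l < 1) : bdef l (10 / 7) < 1 := by
  have hx : 72 / 100 < xstar l (10 / 7) := by
    rw [← xQuadratic_neg_iff hl1 (by norm_num), xQuadratic]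
    norm_num
    linarith
  rw [bdef_lt_one_iff hl1 (by norm_num)]
  exact bQuartic_neg hl0 hl1 hx.le (xstar_lt_one hl1 (by norm_num)).le

/-- The witness is chosen, via `xstar_div`, so that `x* = 13/20 - 3λ/25`. -/
lemma exists_one_lt_bdef (hl0 : 0 < l) (hl1 : l < 1) : ∃ m, 10 / 7 < m ∧ 1 < bdef l m := by
  set c : ℝ := 13 / 20 - 3 / 25 * l with hc_def
  set w : ℝ := (1 - l) * c ^ 2 + (1 + l) * c - 1 with hw_def
  have hc : 0 < c := by rw [hc_def]; linarith
  have hw : 0 < w := by rw [hw_def, hc_def]; nlinarith [mul_pos hl0 (sub_pos.2 hl1)]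
  have hm : 10 / 7 < c / w := by
    rw [lt_div_iff₀ hw, hw_def, hc_def]
    nlinarith
  refine ⟨c / w, hm, ?_⟩
  rw [one_lt_bdef_iff hl1 (by linarith), xstar_div hl1 hc]
  exact bQuartic_pos hl0 hl1

lemma exists_bdef_eq_one (hl0 : 0 < l) (hl1 : l < 1) : ∃ μ, 1 < μ ∧ bdef l μ = 1 := by
  obtain ⟨m, hm, hbm⟩ := exists_one_lt_bdef hl0 hl1
  have hcont : ContinuousOn (bdef l) (Icc (10 / 7) m) :=
    continuousOn_bdef.mono fun μ hμ => lt_of_lt_of_le (by norm_num) hμ.1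
  obtain ⟨μ, hμ, hbμ⟩ :=
    intermediate_value_Ioo hm.le hcont ⟨bdef_ten_sevenths_lt_one hl0 hl1, hbm⟩
  exact ⟨μ, lt_trans (by norm_num) hμ.1, hbμ⟩

end Crossing

/-- For each 0 < λ < 1 there is a unique μ_h > 1 with b(λ,μ_h) = 1; moreover
0 < b(λ,μ) < 1 for 1 < μ < μ_h and b(λ,μ) > 1 for μ > μ_h. -/
theorem stmt_15 (l : ℝ) (hl0 : 0 < l) (hl1 : l < 1) :
    ∃ μh : ℝ, 1 < μh ∧ bdef l μh = 1 ∧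
      (∀ μ : ℝ, 1 < μ → μ < μh → 0 < bdef l μ ∧ bdef l μ < 1) ∧
      (∀ μ : ℝ, μh < μ → 1 < bdef l μ) ∧
      (∀ μ' : ℝ, 1 < μ' → bdef l μ' = 1 → μ' = μh) := by
  obtain ⟨μh, hμh, hb⟩ := exists_bdef_eq_one hl0 hl1
  have above : ∀ μ, μh < μ → 1 < bdef l μ := fun μ h =>
    one_lt_bdef_of_lt hl0 hl1 hμh h hb.ge
  refine ⟨μh, hμh, hb, fun μ hμ h => ⟨bdef_pos hl0 hl1 hμ, ?_⟩, above, fun μ hμ hbμ => ?_⟩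
  · by_contra! hge
    exact (one_lt_bdef_of_lt hl0 hl1 hμ h hge).ne' hb
  · rcases lt_trichotomy μ μh with h | h | h
    · exact absurd hb (one_lt_bdef_of_lt hl0 hl1 hμ h hbμ.ge).ne'
    · exact h
    · exact absurd hbμ (above μ h).ne'
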